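/- Let α, m, λ, E ∈ ℂ with λ ≠ 0, V(z) = α/z + m + λz, and ω(z) = (1 − α)/z − m − λz. If ψ = P exp(∫ ω dz) with P a nonzero polynomial of degree d solving ψ'' = (V² + V' − E²)ψ, then P satisfies P'' + 2((1−α)/z − m − λz)P' = (2m/z − 2λ d)P and necessarily d = E²/(2λ) − 2. -/

import Mathlib

/-!
With Φ'/Φ = ω, the equation ψ'' = (V² + V' − E²)ψ for ψ = PΦ becomes
P'' + 2ωP' = (V² + V' − E² − ω' − ω²)P. For this ω the 1/z² terms of V² + V' − ω' − ω² cancel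
(that is what the exponent 1 − α at 0 achieves), leaving 2m/z + 4λ. Multiplied by z this is a
polynomial identity of biconfluent Heun type, whose coefficient of X^(d+1) reads −2λd = 4λ − E².
-/

open Polynomial

namespace Polynomial

variable {R : Type*} [CommRing R]

theorem coeff_X_mul_derivative (p : R[X]) (n : ℕ) :
    (X * derivative p).coeff n = n * p.coeff n := by
  cases n with
  | zero => simp
  | succ n => rw [coeff_X_mul, coeff_derivative]; push_cast; ring

theorem mul_natDegree_eq_of_biconfluentHeun [NoZeroDivisors R] {a b c e f : R} {P : R[X]}
    (hP : P ≠ 0)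
    (h : X * derivative (derivative P) + (C a + C b * X + C c * X ^ 2) * derivative P
      = (C e + C f * X) * P) :
    c * P.natDegree = f := by
  -- compare the coefficients of X ^ (natDegree P + 1)
  set n := P.natDegree
  have hn1 : P.coeff (n + 1) = 0 := coeff_eq_zero_of_natDegree_lt (Nat.lt_succ_self n)
  have hn2 : P.coeff (n + 1 + 1) = 0 := coeff_eq_zero_of_natDegree_lt (by omega)
  have hcoeff := congrArg (coeff · (n + 1)) h
  have hX2 : C c * X ^ 2 * derivative P = C c * (X * (X * derivative P)) := by ring
  simp only [add_mul, mul_assoc, hX2, coeff_add, coeff_C_mul, coeff_X_mul, coeff_derivative,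
    coeff_X_mul_derivative, hn1, hn2] at hcoeff
  have hlead : P.coeff n ≠ 0 := mt leadingCoeff_eq_zero.mp hP
  refine mul_right_cancel₀ hlead ?_
  linear_combination hcoeff

end Polynomial

theorem hasDerivAt_of_eq_div_add_add_mul {𝕜 : Type*} [NontriviallyNormedField 𝕜]
    {g : 𝕜 → 𝕜} {c a b z : 𝕜} (hg : ∀ w, w ≠ 0 → g w = c / w + a + b * w) (hz : z ≠ 0) :
    HasDerivAt g (-c / z ^ 2 + b) z := by
  have hformula : HasDerivAt (fun w => c / w + a + b * w) (c * -(z ^ 2)⁻¹ + b * 1) z := by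
    simp only [div_eq_mul_inv]
    exact (((hasDerivAt_inv hz).const_mul c).add_const a).add ((hasDerivAt_id z).const_mul b)
  refine (hformula.congr_of_eventuallyEq ?_).congr_deriv (by ring)
  filter_upwards [eventually_ne_nhds hz] with w hw using hg w hw

theorem Polynomial.deriv_deriv_eval_mul_of_hasDerivAt {𝕜 : Type*} [NontriviallyNormedField 𝕜]
    {U : Set 𝕜} (hU : IsOpen U) (P : 𝕜[X]) {Φ ω : 𝕜 → 𝕜}
    (hΦ : ∀ w ∈ U, HasDerivAt Φ (ω w * Φ w) w) {z ω' : 𝕜} (hz : z ∈ U)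
    (hω : HasDerivAt ω ω' z) :
    deriv (deriv fun w => P.eval w * Φ w) z
      = ((derivative (derivative P)).eval z + 2 * ω z * (derivative P).eval z
          + (ω' + ω z ^ 2) * P.eval z) * Φ z := by
  have hfirst : deriv (fun w => P.eval w * Φ w)
      =ᶠ[nhds z] fun w => (derivative P).eval w * Φ w + P.eval w * (ω w * Φ w) := by
    filter_upwards [hU.mem_nhds hz] with w hw
    exact ((P.hasDerivAt w).mul (hΦ w hw)).deriv
  rw [hfirst.deriv_eq]
  have hsecond : HasDerivAt (fun w => (derivative P).eval w * Φ w + P.eval w * (ω w * Φ w))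
      ((derivative (derivative P)).eval z * Φ z + (derivative P).eval z * (ω z * Φ z)
        + ((derivative P).eval z * (ω z * Φ z) + P.eval z * (ω' * Φ z + ω z * (ω z * Φ z)))) z :=
    (((derivative P).hasDerivAt z).mul (hΦ z hz)).add
      ((P.hasDerivAt z).mul (hω.mul (hΦ z hz)))
  rw [hsecond.deriv]
  ring

theorem reduced_equation_of_ode {α m lam E z : ℂ} {P : ℂ[X]} {V ω Φ : ℂ → ℂ} {U : Set ℂ}
    (hU : IsOpen U) (hV : ∀ w : ℂ, w ≠ 0 → V w = α / w + m + lam * w)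
    (hω : ∀ w : ℂ, w ≠ 0 → ω w = (1 - α) / w - m - lam * w)
    (hΦ : ∀ w ∈ U, HasDerivAt Φ (ω w * Φ w) w) (hz : z ∈ U) (hz0 : z ≠ 0) (hΦz : Φ z ≠ 0)
    (hode : deriv (deriv fun w => P.eval w * Φ w) z
      = (V z ^ 2 + deriv V z - E ^ 2) * (P.eval z * Φ z)) :
    (derivative (derivative P)).eval z + 2 * ((1 - α) / z - m - lam * z) * (derivative P).eval z
      = (2 * m / z + 4 * lam - E ^ 2) * P.eval z := by
  have hω' : HasDerivAt ω (-(1 - α) / z ^ 2 + -lam) z :=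
    hasDerivAt_of_eq_div_add_add_mul (a := -m) (fun w hw => by rw [hω w hw]; ring) hz0
  have hV' : HasDerivAt V (-α / z ^ 2 + lam) z := hasDerivAt_of_eq_div_add_add_mul hV hz0
  rw [P.deriv_deriv_eval_mul_of_hasDerivAt hU hΦ hz hω', hV'.deriv, ← mul_assoc] at hode
  have h := mul_right_cancel₀ hΦz hode
  rw [hω z hz0, hV z hz0] at h
  linear_combination h + 2 * lam * P.eval z * mul_inv_cancel₀ hz0

/-- Third Kovacic subcase for V = α/z + m + λz with ω = (1−α)/z − m − λz: if ψ = P·Φ,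
Φ' = ωΦ ≠ 0 on an open nonempty U ⊆ ℂ \ {0}, P a nonzero polynomial of degree d, and
ψ'' = (V² + V' − E²)ψ on U, then P satisfies
P'' + 2((1−α)/z − m − λz)P' = (2m/z − 2λd)P on U and d = E²/(2λ) − 2. -/
theorem kovacic_subcase3_quantization (α m lam E : ℂ) (hlam : lam ≠ 0)
    (d : ℕ) (P : Polynomial ℂ) (hP : P ≠ 0) (hdeg : P.natDegree = d)
    (V ω : ℂ → ℂ)
    (hV : ∀ z : ℂ, z ≠ 0 → V z = α / z + m + lam * z)
    (hω : ∀ z : ℂ, z ≠ 0 → ω z = (1 - α) / z - m - lam * z)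
    (U : Set ℂ) (hU : IsOpen U) (hUne : U.Nonempty) (hU0 : (0 : ℂ) ∉ U)
    (Φ : ℂ → ℂ) (hΦ0 : ∀ z ∈ U, Φ z ≠ 0)
    (hΦ : ∀ z ∈ U, HasDerivAt Φ (ω z * Φ z) z)
    (ψ : ℂ → ℂ) (hψ : ∀ z : ℂ, ψ z = P.eval z * Φ z)
    (hode : ∀ z ∈ U, deriv (deriv ψ) z = (V z ^ 2 + deriv V z - E ^ 2) * ψ z) :
    (∀ z ∈ U, (P.derivative.derivative).eval z
        + 2 * ((1 - α) / z - m - lam * z) * P.derivative.eval z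
        = (2 * m / z - 2 * lam * d) * P.eval z) ∧
      (d : ℂ) = E ^ 2 / (2 * lam) - 2 := by
  obtain rfl : ψ = fun w => P.eval w * Φ w := funext hψ
  have hne : ∀ z ∈ U, z ≠ 0 := fun z hz h => hU0 (h ▸ hz)
  have hred : ∀ z ∈ U, _ := fun z hz =>
    reduced_equation_of_ode hU hV hω hΦ hz (hne z hz) (hΦ0 z hz) (hode z hz)
  have hpoly : X * derivative (derivative P)
      + (C (2 * (1 - α)) + C (-2 * m) * X + C (-2 * lam) * X ^ 2) * derivative P
      = (C (2 * m) + C (4 * lam - E ^ 2) * X) * P := by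
    obtain ⟨z₀, hz₀⟩ := hUne
    refine eq_of_infinite_eval_eq _ _ <| (infinite_of_mem_nhds z₀ (hU.mem_nhds hz₀)).mono ?_
    intro z hz
    have hz_red := hred z hz
    field_simp [hne z hz] at hz_red
    simp only [Set.mem_ofPred_eq, eval_add, eval_mul, eval_C, eval_X, eval_pow]
    linear_combination hz_red
  have hE : -2 * lam * d = 4 * lam - E ^ 2 := hdeg ▸ mul_natDegree_eq_of_biconfluentHeun hP hpoly
  refine ⟨fun z hz => ?_, ?_⟩
  · rw [hred z hz]
    linear_combination -(P.eval z) * hE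
  · field_simp
    linear_combination -hE
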